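/- arXiv:1205.6218 — 4 statements merged into one kernel-verified Lean document; each statement's English description precedes it below -/
import Mathlib

section
/- The double factorial bound: (2k)! / (2^k * k!) ≤ √2 * (2k/e)^k for all k ≥ 1. -/
open Stirling Real

lemma stmt3_aux (x e t s s2 : ℝ) (hx : 0 < x) (he : 0 < e) (ht : 0 < t) (hs : 0 < s) (n : ℕ) :
    s2 * (t * (2 * x / e) ^ (2 * n)) / (2 ^ n * (s * (t / Real.sqrt 2 * (x / e) ^ n)))
      = (s2 / s) * (Real.sqrt 2 * (2 * x / e) ^ n) := by
  have h2n : 2 * n = n + n := two_mul n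
  have hsq : (0:ℝ) < Real.sqrt 2 := by positivity
  rw [h2n, pow_add, div_pow, div_pow]
  field_simp
  ring

theorem stmt_3 (k : ℕ) (hk : 1 ≤ k) :
    ((2 * k).factorial : ℝ) / (2 ^ k * k.factorial) ≤ Real.sqrt 2 * (2 * k / Real.exp 1) ^ k := by
  set n := k with hn
  have hn1 : (1 : ℕ) ≤ n := hk
  have hnpos : (0 : ℝ) < n := by exact_mod_cast hn1
  have hs2 : stirlingSeq (2 * n) ≤ stirlingSeq n := by
    have := stirlingSeq'_antitone (show n - 1 ≤ 2 * n - 1 by omega)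
    simpa [Function.comp, Nat.succ_eq_add_one, Nat.sub_add_cancel hn1,
      Nat.sub_add_cancel (show 1 ≤ 2 * n by omega)] using this
  have hs2pos : 0 < stirlingSeq (2 * n) := by
    have := stirlingSeq'_pos (2 * n - 1)
    rwa [Nat.sub_add_cancel (show 1 ≤ 2 * n by omega)] at this
  have hspos : 0 < stirlingSeq n := by
    have := stirlingSeq'_pos (n - 1)
    rwa [Nat.sub_add_cancel hn1] at this
  have he : (0 : ℝ) < Real.exp 1 := Real.exp_pos 1
  have ha : (0 : ℝ) < Real.sqrt (2 * (2 * n : ℕ)) * ((2 * n : ℕ) / Real.exp 1) ^ (2 * n) := by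
    push_cast; positivity
  have hb : (0 : ℝ) < Real.sqrt (2 * (n : ℕ)) * ((n : ℕ) / Real.exp 1) ^ n := by positivity
  have hfa : ((2 * n).factorial : ℝ) =
      stirlingSeq (2 * n) * (Real.sqrt (2 * (2 * n : ℕ)) * ((2 * n : ℕ) / Real.exp 1) ^ (2 * n)) := by
    rw [stirlingSeq, div_mul_cancel₀ _ ha.ne']
  have hfb : (n.factorial : ℝ) =
      stirlingSeq n * (Real.sqrt (2 * (n : ℕ)) * ((n : ℕ) / Real.exp 1) ^ n) := by
    rw [stirlingSeq, div_mul_cancel₀ _ hb.ne']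
  rw [hfa, hfb]
  set t : ℝ := Real.sqrt (2 * (2 * n : ℕ)) with htdef
  have hsq : (0:ℝ) < Real.sqrt 2 := by positivity
  have ht : 0 < t := by rw [htdef]; push_cast; positivity
  have hcast : Real.sqrt (2 * (n : ℕ)) = t / Real.sqrt 2 := by
    rw [htdef]
    push_cast
    rw [Real.sqrt_mul (by norm_num : (0:ℝ) ≤ 2) (2 * (n:ℝ)),
      mul_div_cancel_left₀ _ (by positivity : Real.sqrt 2 ≠ 0)]
  have hcast2 : ((2 * n : ℕ) : ℝ) = 2 * (n : ℝ) := by push_cast; ring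
  rw [hcast, hcast2, stmt3_aux (n:ℝ) (Real.exp 1) t (stirlingSeq n) (stirlingSeq (2*n))
    hnpos he ht hspos n]
  have hratio : stirlingSeq (2 * n) / stirlingSeq n ≤ 1 := by
    rw [div_le_one hspos]; exact hs2
  have hrhs : (0:ℝ) ≤ Real.sqrt 2 * (2 * (n:ℝ) / Real.exp 1) ^ n := by positivity
  calc stirlingSeq (2 * n) / stirlingSeq n * (Real.sqrt 2 * (2 * (n:ℝ) / Real.exp 1) ^ n)
      ≤ 1 * (Real.sqrt 2 * (2 * (n:ℝ) / Real.exp 1) ^ n) := by gcongr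
    _ = Real.sqrt 2 * (2 * (n:ℝ) / Real.exp 1) ^ n := one_mul _
end

section
/- If a tuple (x₁, ..., x_{2k}) of elements from a set X is chosen uniformly at random from X^{2k}, then the probability that every element of X appears an even number of times in the tuple is at most (2k-1)!! / |X|^k. -/
open Finset

private def aeSet (X : Type) [Fintype X] [DecidableEq X] (n : ℕ) : Finset (Fin n → X) :=
  Finset.univ.filter (fun f => ∀ x : X, Even ((Finset.univ.filter (fun t => f t = x)).card))

private lemma fiber_card (m : ℕ) (j : Fin (m+1)) (f : Fin (m+2) → X') [Fintype X'] [DecidableEq X'] (x : X') :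
    (Finset.univ.filter (fun i : Fin m => f (Fin.succ (j.succAbove i)) = x)).card
      = ((Finset.univ.filter (fun t : Fin (m+2) => f t = x)) \ {0, j.succ}).card := by
  classical
  have hinj : Function.Injective (fun i : Fin m => Fin.succ (j.succAbove i)) :=
    fun a b h => j.succAbove_right_injective (Fin.succ_injective _ h)
  rw [← Finset.card_image_of_injective _ hinj]
  congr 1
  ext t
  simp only [mem_image, mem_filter, mem_univ, true_and, mem_sdiff, mem_insert,
    mem_singleton, not_or]
  constructor
  · rintro ⟨i, hi, rfl⟩
    exact ⟨hi, Fin.succ_ne_zero _, fun h => (j.succAbove_ne i) (Fin.succ_injective _ h)⟩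
  · rintro ⟨hfx, ht0, htj⟩
    obtain ⟨s, rfl⟩ := Fin.exists_succ_eq_of_ne_zero ht0
    have hsj : s ≠ j := fun hh => htj (by rw [hh])
    obtain ⟨i, rfl⟩ := Fin.exists_succAbove_eq hsj
    exact ⟨i, hfx, rfl⟩

private lemma step (X : Type) [Fintype X] [DecidableEq X] (k : ℕ) :
    (aeSet X (2*k+2)).card ≤ (2*k+1) * (Fintype.card X * (aeSet X (2*k)).card) := by
  classical
  set m := 2*k with hm
  have key : ∀ f ∈ aeSet X (m+2), ∃ j : Fin (m+1), f j.succ = f 0 := by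
    intro f hf
    have hmem : ∀ x, Even ((univ.filter (fun t => f t = x)).card) := by
      simpa [aeSet] using hf
    have h0 : (0 : Fin (m+2)) ∈ univ.filter (fun t => f t = f 0) := by simp
    have hcard : 1 < (univ.filter (fun t => f t = f 0)).card := by
      have hpos : 0 < (univ.filter (fun t => f t = f 0)).card := card_pos.mpr ⟨0, h0⟩
      rcases hmem (f 0) with ⟨c, hc⟩
      omega
    obtain ⟨t, ht, hne⟩ := Finset.exists_mem_ne hcard 0
    have htf : f t = f 0 := (Finset.mem_filter.mp ht).2
    obtain ⟨j, rfl⟩ := Fin.exists_succ_eq_of_ne_zero hne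
    exact ⟨j, htf⟩
  let jf : (Fin (m+2) → X) → Fin (m+1) :=
    fun f => if h : ∃ j : Fin (m+1), f j.succ = f 0 then h.choose else 0
  have hjf : ∀ f ∈ aeSet X (m+2), f (jf f).succ = f 0 := by
    intro f hf
    have hex := key f hf
    simp only [jf, dif_pos hex]
    exact hex.choose_spec
  let Φ : (Fin (m+2) → X) → Fin (m+1) × X × (Fin m → X) :=
    fun f => (jf f, f 0, fun i => f (Fin.succ ((jf f).succAbove i)))
  have hmaps : ∀ f ∈ aeSet X (m+2), Φ f ∈ (univ : Finset (Fin (m+1))) ×ˢ ((univ : Finset X) ×ˢ aeSet X m) := by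
    intro f hf
    have hmem : ∀ x, Even ((univ.filter (fun t => f t = x)).card) := by
      simpa [aeSet] using hf
    simp only [Finset.mem_product, mem_univ, true_and, Φ]
    rw [aeSet, Finset.mem_filter]
    refine ⟨mem_univ _, fun x => ?_⟩
    rw [fiber_card]
    by_cases hx : x = f 0
    · subst hx
      have h0 : (0 : Fin (m+2)) ∈ univ.filter (fun t => f t = f 0) := by simp
      have hj : (jf f).succ ∈ univ.filter (fun t => f t = f 0) := by
        simp [hjf f hf]
      rw [Finset.card_sdiff_of_subset (by
        intro t ht
        simp only [mem_insert, mem_singleton] at ht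
        rcases ht with rfl | rfl
        exacts [h0, hj])]
      have hc2 : ({0, (jf f).succ} : Finset (Fin (m+2))).card = 2 := by
        rw [Finset.card_insert_of_notMem (by simp [Ne, (Fin.succ_ne_zero (jf f)).symm]),
          Finset.card_singleton]
      rw [hc2]
      exact (hmem (f 0)).tsub (by decide)
    · have : (univ.filter (fun t : Fin (m+2) => f t = x)) \ {0, (jf f).succ}
          = univ.filter (fun t : Fin (m+2) => f t = x) := by
        apply Finset.sdiff_eq_self_of_disjoint
        rw [Finset.disjoint_left]
        intro t ht ht2
        simp only [mem_filter] at ht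
        simp only [mem_insert, mem_singleton] at ht2
        rcases ht2 with rfl | rfl
        · exact hx (ht.2 ▸ rfl) |>.elim
        · exact hx (by rw [← ht.2, hjf f hf])
      rw [this]
      exact hmem x
  have hinj : Set.InjOn Φ (aeSet X (m+2)) := by
    intro f hf g hg hfg
    have h1 : jf f = jf g := congrArg Prod.fst hfg
    have h2 : f 0 = g 0 := congrArg (Prod.fst ∘ Prod.snd) hfg
    have h3 : ∀ i : Fin m, f (Fin.succ ((jf f).succAbove i)) = g (Fin.succ ((jf g).succAbove i)) := by
      intro i
      have := congrArg (Prod.snd ∘ Prod.snd) hfg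
      exact congrFun this i
    funext t
    rcases eq_or_ne t 0 with rfl | ht0
    · exact h2
    obtain ⟨s, rfl⟩ := Fin.exists_succ_eq_of_ne_zero ht0
    rcases eq_or_ne s (jf f) with rfl | hsj
    · rw [hjf f hf, h2, h1, hjf g hg]
    · obtain ⟨i, rfl⟩ := Fin.exists_succAbove_eq hsj
      have := h3 i
      rwa [← h1] at this
  calc (aeSet X (m+2)).card ≤ ((univ : Finset (Fin (m+1))) ×ˢ ((univ : Finset X) ×ˢ aeSet X m)).card :=
        Finset.card_le_card_of_injOn Φ hmaps hinj
    _ = (m+1) * (Fintype.card X * (aeSet X m).card) := by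
        rw [Finset.card_product, Finset.card_product, Finset.card_univ,
          Finset.card_univ, Fintype.card_fin]

private lemma mainNat (X : Type) [Fintype X] [DecidableEq X] (k : ℕ) :
    2^k * k.factorial * (aeSet X (2*k)).card ≤ (2*k).factorial * (Fintype.card X)^k := by
  induction k with
  | zero =>
    have h1 : (aeSet X 0).card ≤ 1 := by
      calc (aeSet X 0).card ≤ (univ : Finset (Fin 0 → X)).card := Finset.card_filter_le _ _
        _ = 1 := by simp [Finset.card_univ]
    simpa using h1
  | succ k ih =>
    have hs : (aeSet X (2*(k+1))).card ≤ (2*k+1) * (Fintype.card X * (aeSet X (2*k)).card) :=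
      step X k
    have h2 : 2*(k+1) = 2*k+2 := by ring
    calc 2^(k+1) * (k+1).factorial * (aeSet X (2*(k+1))).card
        ≤ 2^(k+1) * (k+1).factorial * ((2*k+1) * (Fintype.card X * (aeSet X (2*k)).card)) := by
          exact Nat.mul_le_mul_left _ hs
      _ = (2*(k+1)) * (2*k+1) * (2^k * k.factorial * (aeSet X (2*k)).card) * Fintype.card X := by
          rw [Nat.factorial_succ]; ring
      _ ≤ (2*(k+1)) * (2*k+1) * ((2*k).factorial * (Fintype.card X)^k) * Fintype.card X :=
          Nat.mul_le_mul_right _ (Nat.mul_le_mul_left _ ih)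
      _ = (2*(k+1)).factorial * (Fintype.card X)^(k+1) := by
          rw [h2, Nat.factorial_succ, Nat.factorial_succ]
          ring

theorem stmt_4 (X : Type) [Fintype X] [DecidableEq X] (k ℓ : ℕ)
    (hℓ : Fintype.card X = ℓ) (hℓ1 : 1 ≤ ℓ) (hk : 1 ≤ k) :
    ((Finset.univ.filter (fun f : Fin (2 * k) → X =>
        ∀ x : X, Even ((Finset.univ.filter (fun t => f t = x)).card))).card : ℝ) ≤
      ((2 * k).factorial : ℝ) / (2 ^ k * k.factorial) * ℓ ^ k := by
  have h := mainNat X k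
  rw [hℓ] at h
  rw [div_mul_eq_mul_div, le_div_iff₀ (by positivity)]
  have h' : ((Finset.univ.filter (fun f : Fin (2 * k) → X =>
      ∀ x : X, Even ((Finset.univ.filter (fun t => f t = x)).card))).card)
      * (2 ^ k * k.factorial) ≤ (2*k).factorial * ℓ^k := by
    rw [mul_comm]; exact h
  exact_mod_cast h'
end

section
/- Final probability bound for the random code: if m = A n / ε² with A > 2 ln 2 and δ = (1-ε)/2, then (n+1)(m+1) 2^{-m} e^{h(δ)(n+m)} ≤ (n+1)(m+1) e^{n ln 2 - (ε²/2)(n+m)} = 2^{-Ω(n)}. -/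
noncomputable def binEntropy (δ : ℝ) : ℝ := -δ * Real.log δ - (1 - δ) * Real.log (1 - δ)

/-!
Adding `2 (p - 1/2)²` to the binary entropy keeps it concave on `[0, 1]`, because
`h'' = -1 / (p (1 - p)) ≤ -4`; being symmetric about `1/2`, the sum is largest there, so
`h (1/2 - x) ≤ log 2 - 2 x²`. With `2^(-m) = e^(-m log 2)` this is the first claim. For
`m = ⌈A n / ε²⌉` the exponent is at most `-(A/2 + ε²/2 - log 2) n`, a positive rate since
`A > 2 log 2`, while the prefactor is `O(n²)`.
-/

open Filter Topology Set

namespace Real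

lemma concaveOn_binEntropy_add_two_mul_sq :
    ConcaveOn ℝ (Icc 0 1) fun p => binEntropy p + 2 * (p - 2⁻¹) ^ 2 := by
  refine concaveOn_of_hasDerivWithinAt2_nonpos (convex_Icc 0 1)
    (f' := fun p => log (1 - p) - log p + 4 * (p - 2⁻¹))
    (f'' := fun p => -(1 - p)⁻¹ - p⁻¹ + 4) (by fun_prop) ?_ ?_ ?_
  all_goals
    intro p hp
    rw [interior_Icc] at hp
    obtain ⟨hp0, hp1⟩ := hp
  · refine HasDerivAt.hasDerivWithinAt ?_
    refine ((hasDerivAt_binEntropy hp0.ne' hp1.ne).add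
      ((((hasDerivAt_id p).sub_const 2⁻¹).pow 2).const_mul 2)).congr_deriv ?_
    simp only [id, Nat.cast_ofNat]; ring
  · refine HasDerivAt.hasDerivWithinAt ?_
    refine ((((hasDerivAt_id p).const_sub 1).log (sub_pos.2 hp1).ne').sub (hasDerivAt_log hp0.ne')
      |>.add (((hasDerivAt_id p).sub_const 2⁻¹).const_mul 4)).congr_deriv ?_
    simp [div_eq_inv_mul]
  · have h : 4 * (p * (1 - p)) ≤ 1 := by nlinarith [sq_nonneg (2 * p - 1)]
    have : (1 - p)⁻¹ + p⁻¹ = (p * (1 - p))⁻¹ := by field_simp; ring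
    have : 4 ≤ (p * (1 - p))⁻¹ := by
      rw [le_inv_comm₀ (by norm_num) (by nlinarith)]; linarith
    linarith

lemma binEntropy_two_inv_sub_le {x : ℝ} (hx : |x| ≤ 2⁻¹) :
    binEntropy (2⁻¹ - x) ≤ log 2 - 2 * x ^ 2 := by
  obtain ⟨hx0, hx1⟩ := abs_le.1 hx
  have half : (0 : ℝ) ≤ 2⁻¹ := by norm_num
  have mid := concaveOn_binEntropy_add_two_mul_sq.2 (x := 2⁻¹ - x) (y := 2⁻¹ + x)
    ⟨by linarith, by linarith⟩ ⟨by linarith, by linarith⟩ half half (by norm_num)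
  simp only [smul_eq_mul] at mid
  rw [binEntropy_two_inv_add, show 2⁻¹ * (2⁻¹ - x) + 2⁻¹ * (2⁻¹ + x) = (2⁻¹ : ℝ) by ring,
    binEntropy_two_inv] at mid
  linarith

end Real

lemma binEntropy_eq_real_binEntropy (p : ℝ) : binEntropy p = Real.binEntropy p := by
  simp only [binEntropy, Real.binEntropy, Real.log_inv]; ring

lemma binEntropy_one_sub_div_two_le {ε : ℝ} (hε : |ε| ≤ 1) :
    binEntropy ((1 - ε) / 2) ≤ Real.log 2 - ε ^ 2 / 2 := by
  obtain ⟨hε0, hε1⟩ := abs_le.1 hε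
  have h := Real.binEntropy_two_inv_sub_le (x := ε / 2) (abs_le.2 ⟨by linarith, by linarith⟩)
  rw [binEntropy_eq_real_binEntropy]
  convert h using 2 <;> ring

lemma two_rpow_neg_mul_exp_le {H c a b : ℝ} (hH : H ≤ Real.log 2 - c) (hab : 0 ≤ a + b) :
    (2 : ℝ) ^ (-b) * Real.exp (H * (a + b)) ≤ Real.exp (a * Real.log 2 - c * (a + b)) := by
  rw [Real.rpow_def_of_pos two_pos, ← Real.exp_add, Real.exp_le_exp]
  nlinarith

lemma tendsto_add_one_pow_mul_exp_neg_mul_atTop {c : ℝ} (hc : 0 < c) (k : ℕ) :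
    Tendsto (fun n : ℕ => ((n : ℝ) + 1) ^ k * Real.exp (-(c * n))) atTop (𝓝 0) := by
  have hr : |Real.exp (-c)| < 1 := by
    rw [abs_of_pos (Real.exp_pos _), Real.exp_lt_one_iff]; linarith
  have h := ((tendsto_add_atTop_iff_nat 1).2
    (tendsto_pow_const_mul_const_pow_of_abs_lt_one k hr)).const_mul (Real.exp c)
  rw [mul_zero] at h
  refine h.congr fun n => ?_
  rw [← Real.exp_nat_mul, Nat.cast_add_one, mul_left_comm, ← Real.exp_add]
  congr 2
  ring

lemma natCeil_mul_add_one_le {B : ℝ} (hB : 0 ≤ B) (n : ℕ) :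
    (⌈B * n⌉₊ : ℝ) + 1 ≤ (B + 2) * (n + 1) := by
  have := Nat.ceil_lt_add_one (mul_nonneg hB n.cast_nonneg)
  nlinarith [n.cast_nonneg (α := ℝ)]

theorem stmt_17 (ε A : ℝ) (hε0 : 0 < ε) (hε1 : ε ≤ 1) (hA : 2 * Real.log 2 < A) :
    (∀ n m : ℕ, 1 ≤ n → A * n / ε ^ 2 ≤ m →
      ((n : ℝ) + 1) * (m + 1) * 2 ^ (-(m : ℝ)) *
          Real.exp (binEntropy ((1 - ε) / 2) * (n + m)) ≤
        ((n : ℝ) + 1) * (m + 1) *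
          Real.exp (n * Real.log 2 - ε ^ 2 / 2 * (n + m))) ∧
    Filter.Tendsto
      (fun n : ℕ =>
        ((n : ℝ) + 1) * ((⌈A * n / ε ^ 2⌉₊ : ℝ) + 1) * 2 ^ (-(⌈A * n / ε ^ 2⌉₊ : ℝ)) *
          Real.exp (binEntropy ((1 - ε) / 2) * (n + ⌈A * n / ε ^ 2⌉₊)))
      Filter.atTop (nhds 0) := by
  have hentropy := binEntropy_one_sub_div_two_le (abs_le.2 ⟨by linarith, hε1⟩)
  have hbound (n m : ℕ) :
      ((n : ℝ) + 1) * (m + 1) * 2 ^ (-(m : ℝ)) *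
          Real.exp (binEntropy ((1 - ε) / 2) * (n + m)) ≤
        ((n : ℝ) + 1) * (m + 1) * Real.exp (n * Real.log 2 - ε ^ 2 / 2 * (n + m)) := by
    rw [mul_assoc]
    exact mul_le_mul_of_nonneg_left (two_rpow_neg_mul_exp_le hentropy (by positivity))
      (by positivity)
  refine ⟨fun n m _ _ => hbound n m, ?_⟩
  have hB : 0 ≤ A / ε ^ 2 := div_nonneg (by linarith [Real.log_pos one_lt_two]) (sq_nonneg ε)
  have hc : 0 < A / 2 + ε ^ 2 / 2 - Real.log 2 := by linarith [sq_nonneg ε]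
  refine squeeze_zero (fun n => by positivity) (fun n => (hbound _ _).trans ?_)
    (by simpa using (tendsto_add_one_pow_mul_exp_neg_mul_atTop hc 2).const_mul (A / ε ^ 2 + 2))
  calc _ ≤ ((n : ℝ) + 1) * ((A / ε ^ 2 + 2) * (n + 1)) *
        Real.exp (-((A / 2 + ε ^ 2 / 2 - Real.log 2) * n)) := by
        gcongr (_ + 1) * ?_ * Real.exp ?_
        · rw [mul_div_right_comm]
          exact natCeil_mul_add_one_le hB n
        · have := (div_le_iff₀ (by positivity)).1 (Nat.le_ceil (A * n / ε ^ 2))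
          nlinarith
    _ = (A / ε ^ 2 + 2) * (((n : ℝ) + 1) ^ 2 *
        Real.exp (-((A / 2 + ε ^ 2 / 2 - Real.log 2) * n))) := by ring
end

section
/- Existence of near-balanced linear codes: for every 0 < ε < 1 and sufficiently large n, there exists m ≤ C n/ε² and α ∈ GF(2^m) such that every nonzero x ∈ F_2^n has |x| + |αx| ≥ (1-ε)(n+m)/2; consequently there exists an ε-biased subset of F_2^n of size O(n/ε²). -/
/-!
Union bound over the nonzero `x`. For a fixed nonzero `x`, `α ↦ α * x` is a bijection of `F`,
so the proportion of `α` for which `α * x` has Hamming weight below `T = (1 - ε)(n + m)/2` is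
the proportion of all words in `𝔽₂ᵐ` with weight below `T`. Chernoff's bound with parameter `ε`
(via `cosh t ≤ exp (t² / 2)`) bounds that proportion by `exp (ε (1 - ε) n - ε² m / 2)`, which is
below `2⁻ⁿ` as soon as `ε² m ≥ 3 n`.
-/

open Real Finset

theorem sum_pow_hammingNorm {ι β R : Type*} [Fintype ι] [DecidableEq ι] [Fintype β]
    [DecidableEq β] [Zero β] [CommSemiring R] (c : R) :
    ∑ w : ι → β, c ^ hammingNorm w = (1 + (Fintype.card β - 1) • c) ^ Fintype.card ι := by
  have hword (w : ι → β) : c ^ hammingNorm w = ∏ i, if w i = 0 then 1 else c := by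
    rw [prod_ite, prod_const_one, prod_const, one_mul]
    rfl
  have hletter : ∑ a : β, (if a = 0 then 1 else c) = 1 + (Fintype.card β - 1) • c := by
    rw [sum_ite, filter_eq', if_pos (mem_univ _), sum_singleton, filter_ne', sum_const,
      card_erase_of_mem (mem_univ _), card_univ]
  simp_rw [hword]
  rw [← Fintype.prod_sum fun (_ : ι) (a : β) => if a = 0 then (1 : R) else c, hletter,
    prod_const, card_univ]

theorem hammingNorm_eq_card_filter_eq_one {ι : Type*} [Fintype ι] (w : ι → ZMod 2) :
    hammingNorm w = #{i | w i = 1} := by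
  have h01 : ∀ a : ZMod 2, a ≠ 0 ↔ a = 1 := by decide
  simp only [hammingNorm, h01]

theorem card_hammingNorm_lt_le {ι : Type*} [Fintype ι] [DecidableEq ι] (T : ℝ) {t : ℝ}
    (ht : 0 ≤ t) :
    (#{w : ι → ZMod 2 | (hammingNorm w : ℝ) < T} : ℝ) ≤
      2 ^ Fintype.card ι * exp (t * (2 * T - Fintype.card ι) + Fintype.card ι * t ^ 2 / 2) := by
  set m := Fintype.card ι
  have hmarkov : (#{w : ι → ZMod 2 | (hammingNorm w : ℝ) < T} : ℝ) ≤
      ∑ w : ι → ZMod 2, exp (2 * t * T) * exp (-(2 * t)) ^ hammingNorm w := by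
    have hpoint : ∀ w ∈ ({w : ι → ZMod 2 | (hammingNorm w : ℝ) < T} : Finset _),
        (1 : ℝ) ≤ exp (2 * t * T) * exp (-(2 * t)) ^ hammingNorm w := fun w hw => by
      rw [← exp_nat_mul, ← exp_add, one_le_exp_iff]
      nlinarith [(mem_filter.1 hw).2]
    calc (#{w : ι → ZMod 2 | (hammingNorm w : ℝ) < T} : ℝ)
        ≤ ∑ w with (hammingNorm w : ℝ) < T, exp (2 * t * T) * exp (-(2 * t)) ^ hammingNorm w := by
          simpa using card_nsmul_le_sum _ _ 1 hpoint
      _ ≤ _ := sum_le_sum_of_subset_of_nonneg (subset_univ _) fun _ _ _ => by positivity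
  have hletter : 1 + exp (-(2 * t)) ≤ 2 * exp (t ^ 2 / 2 - t) := by
    have hcosh : 1 + exp (-(2 * t)) = 2 * exp (-t) * cosh t := by
      rw [cosh_eq, show -(2 * t) = -t + -t by ring, exp_add, exp_neg]
      field_simp
    rw [hcosh, sub_eq_add_neg, exp_add, mul_assoc, mul_comm (exp _)]
    gcongr
    exact cosh_le_exp_half_sq t
  calc (#{w : ι → ZMod 2 | (hammingNorm w : ℝ) < T} : ℝ)
      ≤ exp (2 * t * T) * (1 + exp (-(2 * t))) ^ m := by
        rwa [← mul_sum, sum_pow_hammingNorm, ZMod.card,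
          show (2 - 1 : ℕ) = 1 from rfl, one_smul] at hmarkov
    _ ≤ exp (2 * t * T) * (2 * exp (t ^ 2 / 2 - t)) ^ m := by gcongr
    _ = 2 ^ m * exp (t * (2 * T - m) + m * t ^ 2 / 2) := by
        rw [mul_pow, ← exp_nat_mul, mul_left_comm, ← exp_add]
        ring_nf

theorem two_pow_mul_exp_le_one {ε : ℝ} {n m : ℕ} (hm : 3 * n ≤ ε ^ 2 * m) :
    2 ^ n * exp (ε * (1 - ε) * n - ε ^ 2 * m / 2) ≤ 1 := by
  have htwo : (2 : ℝ) ^ n ≤ exp n := by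
    rw [← exp_one_pow]
    gcongr
    linarith [add_one_le_exp 1]
  calc (2 : ℝ) ^ n * exp (ε * (1 - ε) * n - ε ^ 2 * m / 2)
      ≤ exp n * exp (ε * (1 - ε) * n - ε ^ 2 * m / 2) := by gcongr
    _ ≤ exp 0 := by
        rw [← exp_add, exp_le_exp]
        nlinarith [sq_nonneg (ε - 1 / 2), (Nat.cast_nonneg n : (0 : ℝ) ≤ n)]
    _ = 1 := exp_zero

theorem exists_forall_mul_notMem {F V X : Type*} [GroupWithZero F] [Fintype F] {b : F → V}
    (hb : b.Injective) (ι : X → F) (X' : Finset X) (S : Finset V) (hι : ∀ x ∈ X', ι x ≠ 0)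
    (hcard : #X' * #S < Fintype.card F) : ∃ α : F, ∀ x ∈ X', b (α * ι x) ∉ S := by
  classical
  by_contra! hcover
  have hbad (x) (hx : x ∈ X') : #{α : F | b (α * ι x) ∈ S} ≤ #S :=
    card_le_card_of_injOn (fun α => b (α * ι x)) (fun _ hα => (mem_filter.1 hα).2)
      fun _ _ _ _ h => mul_left_injective₀ (hι x hx) (hb h)
  have huniv : (univ : Finset F) ⊆ X'.biUnion fun x => {α : F | b (α * ι x) ∈ S} := by
    intro α _
    obtain ⟨x, hx, hαx⟩ := hcover α
    exact mem_biUnion.2 ⟨x, hx, mem_filter.2 ⟨mem_univ _, hαx⟩⟩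
  have := (card_le_card huniv).trans (card_biUnion_le_card_mul _ _ _ hbad)
  rw [card_univ] at this
  omega

theorem stmt_18_general (ε : ℝ) (hε0 : 0 < ε) :
    ∃ N : ℕ, ∀ n : ℕ, N ≤ n →
      ∀ (F : Type) [Field F] [Fintype F] [DecidableEq F]
        (b : F ≃+ (Fin ⌈3 * n / ε ^ 2⌉₊ → ZMod 2)) (ι : (Fin n → ZMod 2) →+ F),
        Function.Injective ι →
        ∃ α : F, ∀ x : Fin n → ZMod 2, x ≠ 0 →
          (1 - ε) * ((n : ℝ) + ⌈3 * n / ε ^ 2⌉₊) / 2 ≤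
            ((Finset.univ.filter (fun j : Fin n => x j = 1)).card : ℝ) +
              ((Finset.univ.filter
                  (fun i : Fin ⌈3 * n / ε ^ 2⌉₊ => b (α * ι x) i = 1)).card : ℝ) := by
  refine ⟨0, fun n _ F _ _ _ => ?_⟩
  have hm : 3 * n ≤ ε ^ 2 * ⌈3 * n / ε ^ 2⌉₊ := (div_le_iff₀' (by positivity)).1 (Nat.le_ceil _)
  generalize ⌈3 * (n : ℝ) / ε ^ 2⌉₊ = m at hm ⊢
  intro b ι hι
  set T : ℝ := (1 - ε) * (n + m) / 2
  set B : ℝ := 2 ^ m * exp (ε * (1 - ε) * n - ε ^ 2 * m / 2)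
  have hlight : (#{w : Fin m → ZMod 2 | (hammingNorm w : ℝ) < T} : ℝ) ≤ B := by
    convert card_hammingNorm_lt_le (ι := Fin m) T hε0.le using 3 <;> simp only [Fintype.card_fin]
    ring
  have hcard : #((univ : Finset (Fin n → ZMod 2)).erase 0) *
      #{w : Fin m → ZMod 2 | (hammingNorm w : ℝ) < T} < Fintype.card F := by
    rw [Fintype.card_congr b.toEquiv, card_erase_of_mem (mem_univ _)]
    simp only [card_univ, Fintype.card_pi, ZMod.card, prod_const, Fintype.card_fin]
    rw [← Nat.cast_lt (α := ℝ), Nat.cast_mul, Nat.cast_sub Nat.one_le_two_pow]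
    push_cast
    have hn : (1 : ℝ) ≤ 2 ^ n := one_le_pow₀ one_le_two
    have hB : 0 < B := by positivity
    have hsmall : 2 ^ n * B ≤ 2 ^ m := by
      simpa [B, mul_left_comm] using mul_le_mul_of_nonneg_left (two_pow_mul_exp_le_one hm)
        (by positivity : (0 : ℝ) ≤ 2 ^ m)
    nlinarith [mul_le_mul_of_nonneg_left hlight (sub_nonneg.2 hn)]
  obtain ⟨α, hα⟩ := exists_forall_mul_notMem b.injective ι _ _
    (fun x hx => (map_ne_zero_iff ι hι).2 (ne_of_mem_erase hx)) hcard
  refine ⟨α, fun x hx => ?_⟩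
  have hheavy := hα x (mem_erase.2 ⟨hx, mem_univ x⟩)
  rw [mem_filter, not_and, not_lt, hammingNorm_eq_card_filter_eq_one] at hheavy
  linarith [hheavy (mem_univ _), (#{j | x j = 1}).cast_nonneg (α := ℝ)]

theorem stmt_18 (ε : ℝ) (hε0 : 0 < ε) (hε1 : ε < 1) :
    ∃ N : ℕ, ∀ n : ℕ, N ≤ n →
      ∀ (F : Type) [Field F] [Fintype F] [DecidableEq F]
        (b : F ≃+ (Fin ⌈3 * n / ε ^ 2⌉₊ → ZMod 2)) (ι : (Fin n → ZMod 2) →+ F),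
        Function.Injective ι →
        ∃ α : F, ∀ x : Fin n → ZMod 2, x ≠ 0 →
          (1 - ε) * ((n : ℝ) + ⌈3 * n / ε ^ 2⌉₊) / 2 ≤
            ((Finset.univ.filter (fun j : Fin n => x j = 1)).card : ℝ) +
              ((Finset.univ.filter
                  (fun i : Fin ⌈3 * n / ε ^ 2⌉₊ => b (α * ι x) i = 1)).card : ℝ) :=
  stmt_18_general ε hε0
end
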